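/- arXiv:2501.15156 — 6 statements merged into one kernel-verified Lean document; each statement's English description precedes it below -/
import Mathlib

section
/- Let L₁, L₂, U₁, U₂ be finite sets of rational numbers and let S = {q ∈ ℚ | (∀ a ∈ L₁, a < q) ∧ (∀ a ∈ L₂, a ≤ q) ∧ (∀ b ∈ U₁, q < b) ∧ (∀ b ∈ U₂, q ≤ b)}. If S is nonempty, then in the extended reals, ⨆ q ∈ S, (q : EReal) = ⨅ b ∈ U₁ ∪ U₂, (b : EReal), where the infimum over the empty set is +∞. -/
/-!
Every feasible value lies below each upper bound, so the supremum is at most their minimum.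
Conversely, for any `c` below that minimum pick a rational `q` strictly between `c` and it;
raising a feasible point `x` to `max x q` keeps all lower bounds and stays strictly below every
upper bound, so it is feasible and exceeds `c`.
-/

section FeasibleSet

variable {α : Type*} [LinearOrder α] (L₁ L₂ U₁ U₂ : Finset α)

def feasibleSet : Set α :=
  {q | (∀ a ∈ L₁, a < q) ∧ (∀ a ∈ L₂, a ≤ q) ∧ (∀ b ∈ U₁, q < b) ∧ (∀ b ∈ U₂, q ≤ b)}

variable {L₁ L₂ U₁ U₂}

lemma le_of_mem_feasibleSet {q b : α} (hq : q ∈ feasibleSet L₁ L₂ U₁ U₂) (hb : b ∈ U₁ ∪ U₂) :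
    q ≤ b := by
  obtain ⟨-, -, hU₁, hU₂⟩ := hq
  rcases Finset.mem_union.mp hb with hb | hb
  · exact (hU₁ b hb).le
  · exact hU₂ b hb

lemma max_mem_feasibleSet {x q : α} (hx : x ∈ feasibleSet L₁ L₂ U₁ U₂)
    (hq : ∀ b ∈ U₁ ∪ U₂, q < b) : max x q ∈ feasibleSet L₁ L₂ U₁ U₂ := by
  obtain ⟨hL₁, hL₂, hU₁, hU₂⟩ := hx
  exact ⟨fun a ha => (hL₁ a ha).trans_le (le_max_left x q),
    fun a ha => (hL₂ a ha).trans (le_max_left x q),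
    fun b hb => max_lt (hU₁ b hb) (hq b (Finset.mem_union_left _ hb)),
    fun b hb => max_le (hU₂ b hb) (hq b (Finset.mem_union_right _ hb)).le⟩

end FeasibleSet

lemma EReal.exists_rat_gt_lt_of_lt_iInf {U : Finset ℚ} {c : EReal}
    (hc : c < ⨅ b ∈ U, ((b : ℝ) : EReal)) :
    ∃ q : ℚ, c < ((q : ℝ) : EReal) ∧ ∀ b ∈ U, q < b := by
  obtain ⟨q, hcq, hqU⟩ := EReal.exists_rat_btwn_of_lt hc
  refine ⟨q, hcq, fun b hb => ?_⟩
  exact_mod_cast hqU.trans_le (iInf₂_le b hb)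

theorem sup_feasible_eq_min_upper_bounds (L₁ L₂ U₁ U₂ : Finset ℚ)
    (S : Set ℚ)
    (hS : S = {q : ℚ | (∀ a ∈ L₁, a < q) ∧ (∀ a ∈ L₂, a ≤ q) ∧
      (∀ b ∈ U₁, q < b) ∧ (∀ b ∈ U₂, q ≤ b)})
    (hne : S.Nonempty) :
    ⨆ q ∈ S, ((q : ℝ) : EReal) = ⨅ b ∈ (U₁ ∪ U₂ : Finset ℚ), ((b : ℝ) : EReal) := by
  change S = feasibleSet L₁ L₂ U₁ U₂ at hS
  subst hS
  refine le_antisymm (iSup₂_le fun q hq => le_iInf₂ fun b hb => ?_) (le_of_forall_lt fun c hc => ?_)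
  · exact_mod_cast le_of_mem_feasibleSet hq hb
  · obtain ⟨x, hx⟩ := hne
    obtain ⟨q, hcq, hqU⟩ := EReal.exists_rat_gt_lt_of_lt_iInf hc
    calc c < ((q : ℝ) : EReal) := hcq
      _ ≤ ((max x q : ℚ) : ℝ) := by exact_mod_cast le_max_right x q
      _ ≤ ⨆ q ∈ feasibleSet L₁ L₂ U₁ U₂, ((q : ℝ) : EReal) :=
        le_iSup₂ (f := fun (q : ℚ) _ => ((q : ℝ) : EReal)) _ (max_mem_feasibleSet hx hqU)
end

section
/- Let n ≥ 1 and let b : Fin n → EReal. Then (i) there is exactly one index k ∈ Fin n such that b j < b k for all j < k and b j ≤ b k for all j > k; and (ii) the sum over all k ∈ Fin n of (if (∀ j < k, b j < b k) ∧ (∀ j > k, b j ≤ b k) then b k else 0) equals ⨆ k, b k. -/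
section FirstArgmax

variable {ι α : Type*} [LinearOrder ι]

def IsFirstArgmax [Preorder α] (b : ι → α) (k : ι) : Prop :=
  (∀ j, j < k → b j < b k) ∧ (∀ j, k < j → b j ≤ b k)

theorem IsFirstArgmax.le [Preorder α] {b : ι → α} {k : ι} (hk : IsFirstArgmax b k) (j : ι) :
    b j ≤ b k := by
  rcases lt_trichotomy j k with hj | rfl | hj
  · exact (hk.1 j hj).le
  · exact le_rfl
  · exact hk.2 j hj

theorem IsFirstArgmax.unique [Preorder α] {b : ι → α} {k k' : ι} (hk : IsFirstArgmax b k)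
    (hk' : IsFirstArgmax b k') : k = k' := by
  by_contra hne
  rcases lt_or_gt_of_ne hne with hlt | hlt
  · exact (hk'.1 k hlt).not_ge (hk.le k')
  · exact (hk.1 k' hlt).not_ge (hk'.le k)

theorem exists_isFirstArgmax [Finite ι] [Nonempty ι] [LinearOrder α] (b : ι → α) :
    ∃ k, IsFirstArgmax b k := by
  obtain ⟨m, hm⟩ := Finite.exists_max b
  obtain ⟨k, hk, hmin⟩ := wellFounded_lt.has_min {k | ∀ j, b j ≤ b k} ⟨m, hm⟩
  refine ⟨k, fun j hj => lt_of_le_not_ge (hk j) fun hkj => ?_, fun j _ => hk j⟩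
  exact hmin j (fun i => (hk i).trans hkj) hj

end FirstArgmax

open Classical in
theorem max_operator_correct (n : ℕ) (hn : 1 ≤ n) (b : Fin n → EReal) :
    (∃! k : Fin n, (∀ j, j < k → b j < b k) ∧ (∀ j, k < j → b j ≤ b k)) ∧
    (∑ k : Fin n,
        if (∀ j, j < k → b j < b k) ∧ (∀ j, k < j → b j ≤ b k) then b k else 0) =
      ⨆ k, b k := by
  have : Nonempty (Fin n) := ⟨⟨0, hn⟩⟩
  obtain ⟨k, hk⟩ := exists_isFirstArgmax b
  have hsum : (∑ k : Fin n,
      if (∀ j, j < k → b j < b k) ∧ (∀ j, k < j → b j ≤ b k) then b k else 0) = b k :=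
    (Fintype.sum_eq_single k fun j hj => if_neg fun hj' => hj (IsFirstArgmax.unique hj' hk)).trans
      (if_pos hk)
  exact ⟨⟨k, hk, fun j hj => IsFirstArgmax.unique hj hk⟩,
    hsum.trans (le_antisymm (le_iSup b k) (iSup_le hk.le))⟩
end

section
/- Let V be a finite type of variables, let f, f' : (V → ℚ) → EReal satisfy f σ ≤ f' σ for all σ, and let A, B ⊆ V be such that f depends only on A and f' depends only on B. Define g : (V → ℚ) → EReal by g σ = ⨆ over all τ : V → ℚ with τ x = σ x for every x ∉ A \ B, of f τ. Then: f σ ≤ g σ for all σ; g σ ≤ f' σ for all σ; and g depends only on A ∩ B. In particular, g is a quantitative Craig interpolant of (f, f'). -/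
/-!
Projecting the variables of `A \ B` out of `f` by a supremum gives a quantity above `f`
(take the valuation itself as witness) that still depends only on `A`, hence only on
`A ∩ B`. It stays below `f'` because every valuation in the supremum agrees with `σ` on `B`,
so `f'` takes the same value `f' σ` at all of them.
-/

open Set

section SupQuant

variable {ι : Type*} {α : ι → Type*} {β : Type*} [CompleteLattice β]

def supQuant (S : Set ι) (f : (Π i, α i) → β) (σ : Π i, α i) : β :=
  ⨆ τ ∈ {τ : Π i, α i | ∀ x ∉ S, τ x = σ x}, f τ

theorem le_supQuant (S : Set ι) (f : (Π i, α i) → β) (σ : Π i, α i) : f σ ≤ supQuant S f σ :=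
  le_iSup₂ (f := fun τ _ => f τ) σ fun _ _ => rfl

theorem supQuant_le {S T : Set ι} {f f' : (Π i, α i) → β} (hle : ∀ σ, f σ ≤ f' σ)
    (hf' : DependsOn f' T) (hST : Disjoint S T) (σ : Π i, α i) : supQuant S f σ ≤ f' σ :=
  iSup₂_le fun τ hτ =>
    (hle τ).trans_eq <| hf' fun x hxT => hτ x (hST.notMem_of_mem_right hxT)

theorem supQuant_le_supQuant {S A : Set ι} {f : (Π i, α i) → β} (hf : DependsOn f A)
    {σ τ : Π i, α i} (hστ : ∀ x ∈ A \ S, σ x = τ x) : supQuant S f σ ≤ supQuant S f τ := by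
  classical
  refine iSup₂_le fun ρ hρ => ?_
  -- Transplant `ρ` to the fibre of `τ` by keeping its values on `S` only; `f` cannot tell.
  have hρf : f ρ = f (S.piecewise ρ τ) := hf fun x hxA => by
    by_cases hxS : x ∈ S
    · rw [piecewise_eq_of_mem _ _ _ hxS]
    · rw [piecewise_eq_of_notMem _ _ _ hxS, hρ x hxS, hστ x ⟨hxA, hxS⟩]
  rw [hρf]
  exact le_iSup₂ (f := fun τ _ => f τ) _ fun x hxS => piecewise_eq_of_notMem _ _ _ hxS

theorem DependsOn.supQuant {S A : Set ι} {f : (Π i, α i) → β} (hf : DependsOn f A) :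
    DependsOn (supQuant S f) (A \ S) := fun _ _ hστ =>
  le_antisymm (supQuant_le_supQuant hf hστ)
    (supQuant_le_supQuant hf fun x hx => (hστ x hx).symm)

end SupQuant

theorem craig_interpolant_sup_general (V : Type*)
    (f f' : (V → ℚ) → EReal) (hent : ∀ σ, f σ ≤ f' σ)
    (A B : Set V)
    (hfA : ∀ σ τ : V → ℚ, (∀ x ∈ A, σ x = τ x) → f σ = f τ)
    (hf'B : ∀ σ τ : V → ℚ, (∀ x ∈ B, σ x = τ x) → f' σ = f' τ)
    (g : (V → ℚ) → EReal)
    (hg : ∀ σ, g σ = ⨆ τ ∈ {τ : V → ℚ | ∀ x ∉ A \ B, τ x = σ x}, f τ) :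
    (∀ σ, f σ ≤ g σ) ∧ (∀ σ, g σ ≤ f' σ) ∧
      (∀ σ τ : V → ℚ, (∀ x ∈ A ∩ B, σ x = τ x) → g σ = g τ) := by
  obtain rfl : g = supQuant (A \ B) f := funext hg
  refine ⟨le_supQuant _ f, supQuant_le hent hf'B disjoint_sdiff_left, fun σ τ h => ?_⟩
  rw [← sdiff_sdiff_right_self] at h
  exact DependsOn.supQuant hfA h

theorem craig_interpolant_sup (V : Type*) [Fintype V]
    (f f' : (V → ℚ) → EReal) (hent : ∀ σ, f σ ≤ f' σ)
    (A B : Set V)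
    (hfA : ∀ σ τ : V → ℚ, (∀ x ∈ A, σ x = τ x) → f σ = f τ)
    (hf'B : ∀ σ τ : V → ℚ, (∀ x ∈ B, σ x = τ x) → f' σ = f' τ)
    (g : (V → ℚ) → EReal)
    (hg : ∀ σ, g σ = ⨆ τ ∈ {τ : V → ℚ | ∀ x ∉ A \ B, τ x = σ x}, f τ) :
    (∀ σ, f σ ≤ g σ) ∧ (∀ σ, g σ ≤ f' σ) ∧
      (∀ σ τ : V → ℚ, (∀ x ∈ A ∩ B, σ x = τ x) → g σ = g τ) :=
  craig_interpolant_sup_general V f f' hent A B hfA hf'B g hg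
end

section
/- Let V be a finite type of variables, let f, f' : (V → ℚ) → EReal satisfy f σ ≤ f' σ for all σ, and let A, B ⊆ V be such that f depends only on A and f' depends only on B. Define g : (V → ℚ) → EReal by g σ = ⨆ over all τ : V → ℚ with τ x = σ x for every x ∉ A \ B, of f τ. Then g is the strongest quantitative Craig interpolant of (f, f'): for every g' : (V → ℚ) → EReal that depends only on A ∩ B and satisfies f σ ≤ g' σ and g' σ ≤ f' σ for all σ, we have g σ ≤ g' σ for all σ. -/
theorem iSup_eqOn_compl_le_of_dependsOn {ι α β : Type*} [CompleteLattice β]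
    {f h : (ι → α) → β} {S T : Set ι} (hh : DependsOn h S) (hST : Disjoint S T)
    (hfh : ∀ σ, f σ ≤ h σ) (σ : ι → α) :
    ⨆ τ ∈ {τ : ι → α | ∀ x ∉ T, τ x = σ x}, f τ ≤ h σ := by
  refine iSup₂_le fun τ hτ => ?_
  have hτσ : h τ = h σ := hh fun x hxS => hτ x (hST.notMem_of_mem_left hxS)
  exact hτσ ▸ hfh τ

theorem craig_interpolant_sup_strongest_general (V : Type*)
    (f f' : (V → ℚ) → EReal)
    (A B : Set V)
    (g : (V → ℚ) → EReal)
    (hg : ∀ σ, g σ = ⨆ τ ∈ {τ : V → ℚ | ∀ x ∉ A \ B, τ x = σ x}, f τ) :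
    ∀ g' : (V → ℚ) → EReal,
      (∀ σ τ : V → ℚ, (∀ x ∈ A ∩ B, σ x = τ x) → g' σ = g' τ) →
      (∀ σ, f σ ≤ g' σ) → (∀ σ, g' σ ≤ f' σ) →
      ∀ σ, g σ ≤ g' σ := by
  intro g' hg'AB hfg' _ σ
  rw [hg σ]
  exact iSup_eqOn_compl_le_of_dependsOn (fun σ τ => hg'AB σ τ)
    Set.disjoint_sdiff_inter.symm hfg' σ

theorem craig_interpolant_sup_strongest (V : Type*) [Fintype V]
    (f f' : (V → ℚ) → EReal) (hent : ∀ σ, f σ ≤ f' σ)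
    (A B : Set V)
    (hfA : ∀ σ τ : V → ℚ, (∀ x ∈ A, σ x = τ x) → f σ = f τ)
    (hf'B : ∀ σ τ : V → ℚ, (∀ x ∈ B, σ x = τ x) → f' σ = f' τ)
    (g : (V → ℚ) → EReal)
    (hg : ∀ σ, g σ = ⨆ τ ∈ {τ : V → ℚ | ∀ x ∉ A \ B, τ x = σ x}, f τ) :
    ∀ g' : (V → ℚ) → EReal,
      (∀ σ τ : V → ℚ, (∀ x ∈ A ∩ B, σ x = τ x) → g' σ = g' τ) →
      (∀ σ, f σ ≤ g' σ) → (∀ σ, g' σ ≤ f' σ) →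
      ∀ σ, g σ ≤ g' σ :=
  craig_interpolant_sup_strongest_general V f f' A B g hg
end

section
/- Let V be a finite type of variables, let f, f' : (V → ℚ) → EReal satisfy f σ ≤ f' σ for all σ, and let A, B ⊆ V be such that f depends only on A and f' depends only on B. Define h : (V → ℚ) → EReal by h σ = ⨅ over all τ : V → ℚ with τ x = σ x for every x ∉ B \ A, of f' τ. Then: f σ ≤ h σ for all σ; h σ ≤ f' σ for all σ; and h depends only on A ∩ B. In particular, h is a quantitative Craig interpolant of (f, f'). -/
/-! Eliminating the variables of `B \ A` from `f'` by an infimum yields a quantity that lies below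
`f'` and no longer mentions `B \ A`, hence depends only on `A ∩ B`. It still lies above `f`: every
valuation in the infimum agrees with `σ` on `A`, where `f` does not see the difference. -/

open Set

section ProjectInf

variable {ι : Type*} {β : ι → Type*} {α : Type*} [CompleteLattice α]

/-- The infimum quantifier, projecting the variables of `S` out of `g`. -/
def projectInf (S : Set ι) (g : (Π i, β i) → α) (σ : Π i, β i) : α :=
  ⨅ τ ∈ {τ : Π i, β i | ∀ x ∉ S, τ x = σ x}, g τ

theorem projectInf_le (S : Set ι) (g : (Π i, β i) → α) (σ : Π i, β i) :
    projectInf S g σ ≤ g σ :=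
  iInf₂_le σ fun _ _ => rfl

theorem le_projectInf {S : Set ι} {f g : (Π i, β i) → α} (hf : DependsOn f Sᶜ)
    (hfg : ∀ σ, f σ ≤ g σ) (σ : Π i, β i) : f σ ≤ projectInf S g σ :=
  le_iInf₂ fun τ hτ => (hf fun x hx => (hτ x hx).symm).le.trans (hfg τ)

theorem DependsOn.projectInf_le_projectInf {S T : Set ι} {g : (Π i, β i) → α}
    (hg : DependsOn g T) {σ τ : Π i, β i} (hστ : ∀ x ∈ T \ S, σ x = τ x) :
    projectInf S g σ ≤ projectInf S g τ := by
  classical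
  refine le_iInf₂ fun τ' hτ' => ?_
  -- `τ'` spliced into `σ` over `S` competes in the infimum for `σ` and has the same `g`-value.
  have hmem : ∀ x ∉ S, S.piecewise τ' σ x = σ x := fun x hx => piecewise_eq_of_notMem _ _ _ hx
  refine (iInf₂_le _ hmem).trans_eq (hg fun x hxT => ?_)
  by_cases hxS : x ∈ S
  · exact piecewise_eq_of_mem _ _ _ hxS
  · rw [piecewise_eq_of_notMem _ _ _ hxS, hστ x ⟨hxT, hxS⟩, hτ' x hxS]

theorem DependsOn.projectInf {S T : Set ι} {g : (Π i, β i) → α} (hg : DependsOn g T) :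
    DependsOn (projectInf S g) (T \ S) := fun _ _ hστ =>
  (hg.projectInf_le_projectInf hστ).antisymm
    (hg.projectInf_le_projectInf fun x hx => (hστ x hx).symm)

end ProjectInf

theorem craig_interpolant_inf_general (V : Type*)
    (f f' : (V → ℚ) → EReal) (hent : ∀ σ, f σ ≤ f' σ)
    (A B : Set V)
    (hfA : ∀ σ τ : V → ℚ, (∀ x ∈ A, σ x = τ x) → f σ = f τ)
    (hf'B : ∀ σ τ : V → ℚ, (∀ x ∈ B, σ x = τ x) → f' σ = f' τ)
    (h : (V → ℚ) → EReal)
    (hh : ∀ σ, h σ = ⨅ τ ∈ {τ : V → ℚ | ∀ x ∉ B \ A, τ x = σ x}, f' τ) :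
    (∀ σ, f σ ≤ h σ) ∧ (∀ σ, h σ ≤ f' σ) ∧
      (∀ σ τ : V → ℚ, (∀ x ∈ A ∩ B, σ x = τ x) → h σ = h τ) := by
  obtain rfl : h = projectInf (B \ A) f' := funext hh
  have hf : DependsOn f (B \ A)ᶜ :=
    DependsOn.mono (fun x hxA hxBA => hxBA.2 hxA) fun _ _ => hfA _ _
  have hf' : DependsOn f' B := fun _ _ => hf'B _ _
  have hh' : DependsOn (projectInf (B \ A) f') (A ∩ B) :=
    hf'.projectInf.mono (_root_.sdiff_sdiff_right_self.trans (inter_comm B A)).le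
  exact ⟨le_projectInf hf hent, projectInf_le _ _, fun _ _ => @hh' _ _⟩

theorem craig_interpolant_inf (V : Type*) [Fintype V]
    (f f' : (V → ℚ) → EReal) (hent : ∀ σ, f σ ≤ f' σ)
    (A B : Set V)
    (hfA : ∀ σ τ : V → ℚ, (∀ x ∈ A, σ x = τ x) → f σ = f τ)
    (hf'B : ∀ σ τ : V → ℚ, (∀ x ∈ B, σ x = τ x) → f' σ = f' τ)
    (h : (V → ℚ) → EReal)
    (hh : ∀ σ, h σ = ⨅ τ ∈ {τ : V → ℚ | ∀ x ∉ B \ A, τ x = σ x}, f' τ) :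
    (∀ σ, f σ ≤ h σ) ∧ (∀ σ, h σ ≤ f' σ) ∧
      (∀ σ τ : V → ℚ, (∀ x ∈ A ∩ B, σ x = τ x) → h σ = h τ) :=
  craig_interpolant_inf_general V f f' hent A B hfA hf'B h hh
end

section
/- Let V be a finite type of variables, let f, f' : (V → ℚ) → EReal satisfy f σ ≤ f' σ for all σ, and let A, B ⊆ V be such that f depends only on A and f' depends only on B. Define h : (V → ℚ) → EReal by h σ = ⨅ over all τ : V → ℚ with τ x = σ x for every x ∉ B \ A, of f' τ. Then h is the weakest quantitative Craig interpolant of (f, f'): for every g' : (V → ℚ) → EReal that depends only on A ∩ B and satisfies f σ ≤ g' σ and g' σ ≤ f' σ for all σ, we have g' σ ≤ h σ for all σ. -/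
theorem le_biInf_of_forall_le_of_eqOn {V Q L : Type*} [CompleteLattice L]
    {g f : (V → Q) → L} {S : Set V}
    (hgS : ∀ σ τ : V → Q, (∀ x ∈ S, σ x = τ x) → g σ = g τ) (hgf : ∀ σ, g σ ≤ f σ)
    {σ : V → Q} {T : Set (V → Q)} (hT : ∀ τ ∈ T, ∀ x ∈ S, σ x = τ x) :
    g σ ≤ ⨅ τ ∈ T, f τ :=
  le_iInf₂ fun τ hτ => hgS σ τ (hT τ hτ) ▸ hgf τ

theorem craig_interpolant_inf_weakest_general (V : Type*)
    (f f' : (V → ℚ) → EReal)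
    (A B : Set V)
    (h : (V → ℚ) → EReal)
    (hh : ∀ σ, h σ = ⨅ τ ∈ {τ : V → ℚ | ∀ x ∉ B \ A, τ x = σ x}, f' τ) :
    ∀ g' : (V → ℚ) → EReal,
      (∀ σ τ : V → ℚ, (∀ x ∈ A ∩ B, σ x = τ x) → g' σ = g' τ) →
      (∀ σ, f σ ≤ g' σ) → (∀ σ, g' σ ≤ f' σ) →
      ∀ σ, g' σ ≤ h σ := by
  intro g' hg'AB _ hg'f' σ
  rw [hh]
  refine le_biInf_of_forall_le_of_eqOn hg'AB hg'f' fun τ hτ x hx => ?_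
  exact (hτ x fun hx' => hx'.2 hx.1).symm

theorem craig_interpolant_inf_weakest (V : Type*) [Fintype V]
    (f f' : (V → ℚ) → EReal) (hent : ∀ σ, f σ ≤ f' σ)
    (A B : Set V)
    (hfA : ∀ σ τ : V → ℚ, (∀ x ∈ A, σ x = τ x) → f σ = f τ)
    (hf'B : ∀ σ τ : V → ℚ, (∀ x ∈ B, σ x = τ x) → f' σ = f' τ)
    (h : (V → ℚ) → EReal)
    (hh : ∀ σ, h σ = ⨅ τ ∈ {τ : V → ℚ | ∀ x ∉ B \ A, τ x = σ x}, f' τ) :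
    ∀ g' : (V → ℚ) → EReal,
      (∀ σ τ : V → ℚ, (∀ x ∈ A ∩ B, σ x = τ x) → g' σ = g' τ) →
      (∀ σ, f σ ≤ g' σ) → (∀ σ, g' σ ≤ f' σ) →
      ∀ σ, g' σ ≤ h σ :=
  craig_interpolant_inf_weakest_general V f f' A B h hh
end
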